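/- arXiv:1907.00791 — 2 statements merged into one kernel-verified Lean document; each statement's English description precedes it below -/
import Mathlib

section
/- Let T be a finite tree (connected acyclic simple graph) with at least two vertices. Then there exists a function φ assigning to each edge e of T a complex number φ(e) of modulus one such that for every internal vertex v (a vertex of degree at least two), the sum of φ(e) over all edges e incident to v equals zero. -/
/-!
Root the tree anywhere. At each internal vertex `v` of degree `d`, label the incident edges by
the distinct `d`-th roots of unity, whose sum is zero. These local labellings need not agree on
an edge `uv`, but they can be made to by rescaling the labels at each vertex by a unit scalar
`c v`: the required ratios `c v / c u` form a cocycle along the edges, and on a tree every such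
cocycle is a coboundary (take products along the unique path from the root). Rescaling does not
affect the vanishing of the sums.
-/

open SimpleGraph Finset Real

noncomputable def Finset.rootOfUnityLabel {α : Type*} [DecidableEq α] (s : Finset α) (a : α) :
    Circle :=
  if h : a ∈ s then Circle.exp (2 * π / #s) ^ (s.equivFin ⟨a, h⟩ : ℕ) else 1

theorem Finset.sum_rootOfUnityLabel {α : Type*} [DecidableEq α] {s : Finset α} (hs : 2 ≤ #s) :
    ∑ a ∈ s, (s.rootOfUnityLabel a : ℂ) = 0 := by
  have hζ : IsPrimitiveRoot (Circle.exp (2 * π / #s) : ℂ) #s := by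
    convert Complex.isPrimitiveRoot_exp #s (by omega) using 2
    rw [Circle.coe_exp]
    push_cast
    rw [div_mul_eq_mul_div]
  rw [← Finset.sum_coe_sort s, ← hζ.geom_sum_eq_zero (by omega), ← Fin.sum_univ_eq_sum_range]
  exact Fintype.sum_equiv s.equivFin _ _ fun a => by simp [rootOfUnityLabel]

theorem SimpleGraph.sum_incidenceFinset_eq_sum_neighborFinset {V M : Type*} [AddCommMonoid M]
    [DecidableEq V] (G : SimpleGraph V) (v : V) [Fintype (G.neighborSet v)] (f : Sym2 V → M) :
    ∑ e ∈ G.incidenceFinset v, f e = ∑ w ∈ G.neighborFinset v, f s(v, w) := by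
  symm
  refine Finset.sum_bij (fun w _ => s(v, w)) (fun w hw => ?_)
    (fun _ _ _ _ => Sym2.congr_right.mp) (fun e he => ?_) fun _ _ => rfl
  · simpa [G.mem_incidence_iff_neighbor] using hw
  · rw [mem_incidenceFinset] at he
    exact ⟨G.otherVertexOfIncident he, by simpa using G.incidence_other_prop he,
      Sym2.other_spec' he.2⟩

theorem SimpleGraph.IsAcyclic.eq_concat_or_eq_concat {V : Type*} {G : SimpleGraph V}
    (hG : G.IsAcyclic) {r u v : V} {p : G.Walk r u} {q : G.Walk r v} (hp : p.IsPath)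
    (hq : q.IsPath) (h : G.Adj u v) : q = p.concat h ∨ p = q.concat h.symm := by
  by_cases hu : u ∈ q.support
  · exact .inl (hG.path_concat hp hq h hu)
  · exact .inr (hG.path_concat hq hp h.symm
      (hG.mem_support_of_ne_mem_support_of_adj_of_isPath hp hq h hu))

theorem SimpleGraph.IsTree.exists_potential {V α : Type*} [Group α] {G : SimpleGraph V}
    (hG : G.IsTree) (g : V → V → α) :
    ∃ c : V → α, ∀ ⦃u v⦄, G.Adj u v → c u * g u v = c v * g v u := by
  obtain ⟨r⟩ := hG.connected.nonempty
  choose p hp using fun v => (hG.existsUnique_path r v).exists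
  let c (v : V) : α := ((p v).darts.map fun d => g d.fst d.snd * (g d.snd d.fst)⁻¹).prod
  have hc {u v : V} (h : G.Adj u v) (huv : p v = (p u).concat h) :
      c u * g u v = c v * g v u := by
    simp [c, huv, Walk.darts_concat, List.concat_eq_append, mul_assoc]
  refine ⟨c, fun u v h => ?_⟩
  rcases hG.isAcyclic.eq_concat_or_eq_concat (hp u) (hp v) h with huv | hvu
  · exact hc h huv
  · exact (hc h.symm hvu).symm

theorem stmt7_general {V : Type*} [Fintype V] [DecidableEq V] (G : SimpleGraph V)
    [DecidableRel G.Adj] (hconn : G.Connected) (hacyc : G.IsAcyclic) :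
    ∃ φ : Sym2 V → ℂ,
      (∀ e ∈ G.edgeSet, ‖φ e‖ = 1) ∧
      ∀ v : V, 2 ≤ G.degree v → ∑ e ∈ G.incidenceFinset v, φ e = 0 := by
  let χ (v : V) : V → Circle := (G.neighborFinset v).rootOfUnityLabel
  obtain ⟨c, hc⟩ := IsTree.exists_potential ⟨hconn, hacyc⟩ χ
  let φ : Sym2 V → ℂ := Sym2.lift ⟨fun u v => if G.Adj u v then ↑(c u * χ u v) else 0,
    fun u v => by
      by_cases h : G.Adj u v
      · simp only [if_pos h, if_pos h.symm, hc h]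
      · simp only [if_neg h, if_neg (mt G.adj_symm h)]⟩
  have hφ {u v : V} (h : G.Adj u v) : φ s(u, v) = c u * χ u v := by
    simp only [φ, Sym2.lift_mk, if_pos h, Circle.coe_mul]
  refine ⟨φ, fun e he => ?_, fun v hv => ?_⟩
  · induction e using Sym2.ind
    rw [hφ he, ← Circle.coe_mul, Circle.norm_coe]
  · rw [sum_incidenceFinset_eq_sum_neighborFinset,
      sum_congr rfl fun w hw => hφ ((G.mem_neighborFinset v w).mp hw), ← mul_sum,
      sum_rootOfUnityLabel (G.card_neighborFinset_eq_degree v ▸ hv), mul_zero]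

/-- On a finite tree with at least two vertices there is an assignment of unit complex numbers
to the edges such that at every internal vertex (degree at least two) the values on the
incident edges sum to zero. -/
theorem stmt7 {V : Type*} [Fintype V] [DecidableEq V] (G : SimpleGraph V)
    [DecidableRel G.Adj] (hconn : G.Connected) (hacyc : G.IsAcyclic)
    (hcard : 1 < Fintype.card V) :
    ∃ φ : Sym2 V → ℂ,
      (∀ e ∈ G.edgeSet, ‖φ e‖ = 1) ∧
      ∀ v : V, 2 ≤ G.degree v → ∑ e ∈ G.incidenceFinset v, φ e = 0 :=
  stmt7_general G hconn hacyc
end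

section
/- Let G be a finite connected simple graph with E edges, V vertices and first Betti number β = E − V + 1, and suppose G is not bipartite. Then the space of edge functions ψ : E(G) → ℂ satisfying the all-plus balance condition Σ_{e incident to v} ψ(e) = 0 at every vertex v has dimension β − 1. -/
/-- The "all-plus" balance map sending an edge function `ψ` to the vertex function
`v ↦ Σ_{e incident to v} ψ(e)`. -/
noncomputable def balanceMap {V : Type*} [Fintype V] [DecidableEq V] (G : SimpleGraph V)
    [DecidableRel G.Adj] : (G.edgeSet → ℂ) →ₗ[ℂ] (V → ℂ) where
  toFun ψ v := ∑ e ∈ (G.incidenceFinset v).attach,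
    ψ ⟨e.1, ((G.mem_incidenceFinset v e.1).mp e.2).1⟩
  map_add' ψ φ := by funext v; simp [Finset.sum_add_distrib]
  map_smul' c ψ := by funext v; simp [Finset.mul_sum]

section Aux

variable {V : Type*} [Fintype V] [DecidableEq V] (G : SimpleGraph V) [DecidableRel G.Adj]

/-- Unsigned incidence matrix. -/
noncomputable def incM : Matrix V G.edgeSet ℂ :=
  fun v e => if v ∈ (e : Sym2 V) then 1 else 0

lemma balance_eq_mulVecLin : balanceMap G = (incM G).mulVecLin := by
  classical
  apply LinearMap.ext; intro ψ; funext v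
  show ∑ e ∈ (G.incidenceFinset v).attach,
      ψ ⟨e.1, ((G.mem_incidenceFinset v e.1).mp e.2).1⟩ = _
  set F : Sym2 V → ℂ := fun s =>
    if h : s ∈ G.edgeSet then (if v ∈ s then ψ ⟨s, h⟩ else 0) else 0 with hF
  have hL : ∑ e ∈ (G.incidenceFinset v).attach,
      ψ ⟨e.1, ((G.mem_incidenceFinset v e.1).mp e.2).1⟩ = ∑ e ∈ G.incidenceFinset v, F e := by
    rw [← Finset.sum_attach (G.incidenceFinset v) F]
    apply Finset.sum_congr rfl
    intro e _
    have h2 := (G.mem_incidenceFinset v e.1).mp e.2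
    simp [hF, h2.1, h2.2]
  rw [hL]
  have hR : (incM G).mulVecLin ψ v = ∑ e ∈ G.edgeFinset, F e := by
    rw [Finset.sum_subtype G.edgeFinset (fun x => SimpleGraph.mem_edgeFinset) F]
    rw [Matrix.mulVecLin_apply, Matrix.mulVec, dotProduct]
    simp only [incM, ite_mul, one_mul, zero_mul]
    apply Finset.sum_congr rfl
    intro e _
    simp [hF, e.2]
  rw [hR]
  apply Finset.sum_subset
  · exact fun e he => (SimpleGraph.mem_edgeFinset).mpr ((G.mem_incidenceFinset v e).mp he).1
  · intro e he hne
    have hv : v ∉ e := by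
      intro hv
      exact hne ((G.mem_incidenceFinset v e).mpr ⟨(SimpleGraph.mem_edgeFinset).mp he, hv⟩)
    simp [hF, hv]

lemma key_adj (f : V → ℂ) (hf : (incM G).transpose.mulVecLin f = 0) :
    ∀ u w, G.Adj u w → f w = -f u := by
  intro u w huw
  have h := congrFun hf ⟨s(u, w), huw⟩
  simp only [Matrix.mulVecLin_apply, Pi.zero_apply] at h
  rw [Matrix.mulVec, dotProduct] at h
  simp only [Matrix.transpose_apply, incM, ite_mul, one_mul, zero_mul] at h
  rw [← Finset.sum_filter] at h
  have hfil : Finset.univ.filter (fun v => v ∈ s(u, w)) = {u, w} := by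
    ext v; simp [Sym2.mem_iff]
  rw [hfil, Finset.sum_pair huw.ne] at h
  linear_combination h

lemma transpose_inj (hconn : G.Connected)
    (hnbip : ¬ ∃ c : V → Bool, ∀ v w, G.Adj v w → c v ≠ c w) :
    Function.Injective (incM G).transpose.mulVecLin := by
  classical
  rw [← LinearMap.ker_eq_bot, LinearMap.ker_eq_bot']
  intro f hf
  have key := key_adj G f hf
  have alt : ∀ a b : V, G.Walk a b → f b = f a ∨ f b = -f a := by
    intro a b p
    induction p with
    | nil => exact Or.inl rfl
    | @cons a x b hax q ih =>
      have hx := key _ _ hax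
      rcases ih with h1 | h1
      · right; rw [h1, hx]
      · left; rw [h1, hx, neg_neg]
  by_contra hne
  have hne' : ∃ v₀, f v₀ ≠ 0 := by
    by_contra hall
    push_neg at hall
    exact hne (funext hall)
  obtain ⟨v₀, hv₀⟩ := hne'
  apply hnbip
  refine ⟨fun v => decide (f v = f v₀), ?_⟩
  intro v w hvw
  have hv : f v = f v₀ ∨ f v = -f v₀ := by
    obtain ⟨p⟩ := hconn.preconnected v₀ v
    exact alt _ _ p
  have hw := key _ _ hvw
  have hne2 : (-f v₀ : ℂ) ≠ f v₀ := by
    intro hc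
    apply hv₀
    have : (2 : ℂ) * f v₀ = 0 := by linear_combination -hc
    simpa using this
  rcases hv with h1 | h1
  · have : f w = -f v₀ := by rw [hw, h1]
    simp [h1, this, hne2]
  · have : f w = f v₀ := by rw [hw, h1, neg_neg]
    have h1' : f v ≠ f v₀ := by rw [h1]; exact hne2
    simp [h1', this]

end Aux

/-- For a finite connected non-bipartite simple graph, the space of edge functions satisfying the
all-plus balance condition at every vertex has dimension `β - 1 = E - V`. -/
theorem stmt19 {V : Type*} [Fintype V] [DecidableEq V] (G : SimpleGraph V)
    [DecidableRel G.Adj] (hconn : G.Connected)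
    (hnbip : ¬ ∃ c : V → Bool, ∀ v w, G.Adj v w → c v ≠ c w) :
    Module.finrank ℂ (LinearMap.ker (balanceMap G)) =
      G.edgeFinset.card - Fintype.card V := by
  classical
  rw [balance_eq_mulVecLin]
  have hinj := transpose_inj G hconn hnbip
  have hrankT : Module.finrank ℂ (LinearMap.range (incM G).transpose.mulVecLin) = Fintype.card V := by
    rw [LinearMap.finrank_range_of_inj hinj, Module.finrank_fintype_fun_eq_card]
  have hrank : Module.finrank ℂ (LinearMap.range (incM G).mulVecLin) = Fintype.card V := by
    have := Matrix.rank_transpose (incM G)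
    rw [Matrix.rank, Matrix.rank] at this
    rw [← this, hrankT]
  have hrn := LinearMap.finrank_range_add_finrank_ker (incM G).mulVecLin
  rw [Module.finrank_fintype_fun_eq_card, hrank] at hrn
  have hE : G.edgeFinset.card = Fintype.card G.edgeSet := Set.toFinset_card _
  omega
end
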